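/- arXiv:2010.08022 — 3 statements merged into one kernel-verified Lean document; each statement's English description precedes it below -/
import Mathlib

section
/- For lower-triangular L, the identity E·(I ⊗ L)·D·E = E·(I ⊗ L) holds, where E and D are the elimination and duplication matrices over index pairs i ≥ j. -/
open Matrix
open scoped Kronecker

/-- `vec` stacks the columns of a matrix: entry `(j, i)` is `A i j`. -/
def vecOp {n : ℕ} (A : Matrix (Fin n) (Fin n) ℝ) : Fin n × Fin n → ℝ :=
  fun p => A p.2 p.1
/-- Index pairs `(i, j)` with `j ≤ i`. -/
abbrev SymIdx (n : ℕ) := {p : Fin n × Fin n // p.2 ≤ p.1}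

/-- Elimination matrix: row `(i,j)` (with `j ≤ i`) is `vec(1_{ji})ᵀ`. -/
def elimMat (n : ℕ) : Matrix (SymIdx n) (Fin n × Fin n) ℝ :=
  fun r c => Matrix.single r.val.2 r.val.1 (1 : ℝ) c.2 c.1

/-- Duplication matrix: column `(k,ℓ)` (with `ℓ ≤ k`) is
`vec((1 - δ_{kℓ}) 1_{kℓ} + 1_{ℓk})`. -/
def dupMat (n : ℕ) : Matrix (Fin n × Fin n) (SymIdx n) ℝ :=
  fun r c =>
    ((if c.val.1 = c.val.2 then (0 : ℝ) else 1) • Matrix.single c.val.1 c.val.2 (1 : ℝ)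
      + Matrix.single c.val.2 c.val.1 (1 : ℝ)) r.2 r.1

/-!
Every column of `E (I ⊗ L)` indexed by a pair `(a, b)` with `a < b` vanishes, because the
entry in row `(i, j)` is `δ_{ia} L_{jb}` and `j ≤ i`. On the remaining rows `(a, b)`, `b ≤ a`,
the product `D E` is the identity: `E` reads off such an entry of `vec` and `D` writes it back
to the same place. Hence right multiplication by `D E` does not change `E (I ⊗ L)`.
-/

lemma elimMat_apply {n : ℕ} (r : SymIdx n) (p : Fin n × Fin n) :
    elimMat n r p = if r.val = p then 1 else 0 := by
  simp only [elimMat, single_apply, Prod.ext_iff, and_comm]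

lemma elimMat_mul {n : ℕ} {α : Type*} (M : Matrix (Fin n × Fin n) α ℝ) :
    elimMat n * M = M.submatrix Subtype.val id := by
  ext r c
  simp [mul_apply, elimMat_apply]

-- At a pair `p` with `p.2 ≤ p.1`, the `(1 - δ_{kℓ}) 1_{kℓ}` part of column `(k, ℓ)` can only
-- be nonzero if `k = ℓ`, where its coefficient vanishes.
lemma dupMat_apply_of_le {n : ℕ} {p : Fin n × Fin n} (hp : p.2 ≤ p.1) (c : SymIdx n) :
    dupMat n p c = if c.val = p then 1 else 0 := by
  obtain ⟨⟨k, l⟩, hc⟩ := c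
  obtain ⟨i, j⟩ := p
  by_cases hkl : k = l
  · subst hkl
    simp [dupMat, single_apply, Prod.ext_iff, and_comm]
  · have : ¬(k = j ∧ l = i) := fun ⟨hk, hl⟩ => hkl (le_antisymm (hk ▸ hl ▸ hp) hc)
    simp [dupMat, hkl, single_apply, this, Prod.ext_iff, and_comm]

lemma dupMat_mul_elimMat_apply_of_le {n : ℕ} {p : Fin n × Fin n} (hp : p.2 ≤ p.1)
    (c : Fin n × Fin n) :
    (dupMat n * elimMat n) p c = if p = c then 1 else 0 := by
  rw [mul_apply, Finset.sum_eq_single ⟨p, hp⟩]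
  · simp [dupMat_apply_of_le hp, elimMat_apply]
  · intro s _ hs
    rw [dupMat_apply_of_le hp, if_neg fun h => hs (Subtype.ext h), zero_mul]
  · simp

lemma mul_dupMat_mul_elimMat {n : ℕ} {m : Type*} (X : Matrix m (Fin n × Fin n) ℝ)
    (hX : ∀ r p, p.1 < p.2 → X r p = 0) :
    X * dupMat n * elimMat n = X := by
  ext r c
  rw [Matrix.mul_assoc, mul_apply, Finset.sum_eq_single c]
  · rcases le_or_gt c.2 c.1 with hc | hc
    · simp [dupMat_mul_elimMat_apply_of_le hc]
    · simp [hX r c hc]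
  · intro p _ hpc
    rcases le_or_gt p.2 p.1 with hp | hp
    · simp [dupMat_mul_elimMat_apply_of_le hp, hpc]
    · simp [hX r p hp]
  · simp

lemma elimMat_mul_one_kronecker_apply_eq_zero {n : ℕ} (L : Matrix (Fin n) (Fin n) ℝ)
    (hL : ∀ i j, i < j → L i j = 0) (r : SymIdx n) {p : Fin n × Fin n} (hp : p.1 < p.2) :
    (elimMat n * ((1 : Matrix (Fin n) (Fin n) ℝ) ⊗ₖ L)) r p = 0 := by
  obtain ⟨⟨i, j⟩, hr⟩ := r
  rw [elimMat_mul, submatrix_apply, id, kronecker_apply, one_apply]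
  split_ifs with hi
  · rw [hL j p.2 (hr.trans_lt (hi ▸ hp)), mul_zero]
  · rw [zero_mul]

/-- For lower-triangular `L`, `E · (I ⊗ L) · D · E = E · (I ⊗ L)`. -/
theorem stmt11 {n : ℕ} (L : Matrix (Fin n) (Fin n) ℝ)
    (hL : ∀ i j, i < j → L i j = 0) :
    elimMat n * ((1 : Matrix (Fin n) (Fin n) ℝ) ⊗ₖ L) * dupMat n * elimMat n =
      elimMat n * ((1 : Matrix (Fin n) (Fin n) ℝ) ⊗ₖ L) :=
  mul_dupMat_mul_elimMat _ fun r _ hp => elimMat_mul_one_kronecker_apply_eq_zero L hL r hp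
end

section
/- Let C = E·(I ⊗ Lᵀ)·D with L lower unitriangular. Then the entry of C in row indexed (i,j) and column indexed (k,ℓ) (with j ≤ i, ℓ ≤ k) equals L_{ℓj} if i = k, equals L_{kj} if i = ℓ (and i ≠ k), and equals 0 otherwise. More precisely, C_{ij,kℓ} = L_{kj}(1−δ_{kℓ})δ_{iℓ} + L_{ℓj}δ_{ik}. -/
/-! Column `(k, ℓ)` of `D` is `vec S` with `S = (1 − δ_{kℓ}) 1_{kℓ} + 1_{ℓk}`, and
`(I ⊗ Lᵀ) vec S = vec (Lᵀ S)`; row `(i, j)` of `E` then reads off `(Lᵀ S)_{ji}`, which is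
`L_{kj} (1 − δ_{kℓ}) δ_{iℓ} + L_{ℓj} δ_{ik}`. -/

open Matrix
open scoped Kronecker

namespace Matrix

variable {m R : Type*} [Fintype m] [DecidableEq m]

theorem mul_single_one_apply [NonAssocSemiring R] (M : Matrix m m R) (k l a b : m) :
    (M * single k l (1 : R)) a b = M a k * if b = l then 1 else 0 := by
  by_cases hb : b = l
  · subst hb; simp
  · simp [mul_single_apply_of_ne _ _ _ _ _ hb, hb]

def symUnit [Semiring R] (k l : m) : Matrix m m R :=
  (if k = l then (0 : R) else 1) • single k l 1 + single l k 1

theorem transpose_mul_symUnit_apply [CommSemiring R] (L : Matrix m m R) (i j k l : m) :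
    (Lᵀ * symUnit k l : Matrix m m R) j i =
      L k j * (if k = l then 0 else 1) * (if i = l then 1 else 0)
        + L l j * (if i = k then 1 else 0) := by
  simp only [symUnit, Matrix.mul_add, Matrix.mul_smul, add_apply, smul_apply, smul_eq_mul,
    mul_single_one_apply, transpose_apply]
  ring

end Matrix

theorem elimMat_mul_apply {n : ℕ} {γ : Type*} (M : Matrix (Fin n × Fin n) γ ℝ)
    (r : SymIdx n) (c : γ) : (elimMat n * M) r c = M r.val c := by
  simp [mul_apply, elimMat, single, Fintype.sum_prod_type, ite_and]

theorem mul_dupMat_apply {n : ℕ} {ι : Type*} [Fintype ι] (M : Matrix ι (Fin n × Fin n) ℝ)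
    (r : ι) (c : SymIdx n) : (M * dupMat n) r c = (M *ᵥ vec (symUnit c.val.1 c.val.2)) r :=
  rfl

theorem stmt13_general {n : ℕ} (L : Matrix (Fin n) (Fin n) ℝ)
    (i j k l : Fin n) (hij : j ≤ i) (hkl : l ≤ k) :
    (elimMat n * ((1 : Matrix (Fin n) (Fin n) ℝ) ⊗ₖ Lᵀ) * dupMat n)
        ⟨(i, j), hij⟩ ⟨(k, l), hkl⟩ =
      L k j * (if k = l then 0 else 1) * (if i = l then 1 else 0)
        + L l j * (if i = k then 1 else 0) := by
  rw [Matrix.mul_assoc, elimMat_mul_apply, mul_dupMat_apply, ← vec_mul_eq_mulVec, vec,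
    transpose_mul_symUnit_apply]

/-- Entries of `C = E · (I ⊗ Lᵀ) · D` for `L` lower unitriangular:
`C_{ij,kℓ} = L_{kj}(1 − δ_{kℓ})δ_{iℓ} + L_{ℓj}δ_{ik}`. -/
theorem stmt13 {n : ℕ} (L : Matrix (Fin n) (Fin n) ℝ)
    (hL : ∀ i j, i < j → L i j = 0) (hdiag : ∀ i, L i i = 1)
    (i j k l : Fin n) (hij : j ≤ i) (hkl : l ≤ k) :
    (elimMat n * ((1 : Matrix (Fin n) (Fin n) ℝ) ⊗ₖ Lᵀ) * dupMat n)
        ⟨(i, j), hij⟩ ⟨(k, l), hkl⟩ =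
      L k j * (if k = l then 0 else 1) * (if i = l then 1 else 0)
        + L l j * (if i = k then 1 else 0) :=
  stmt13_general L i j k l hij hkl
end

section
/- Closure of 𝓛 (Takahashi et al.): Let L be lower unitriangular with support contained in a set 𝓛 ⊆ {(i,j) : j ≤ i} that contains all diagonal pairs and satisfies the four-corners property: (i,j),(k,j) ∈ 𝓛 with i < k implies (k,i) ∈ 𝓛. Let C = E·(I ⊗ Lᵀ)·D, whose entries satisfy C_{ij,kℓ} = L_{ℓj} if i = k, L_{kj} if i = ℓ ≠ k, and 0 otherwise. Then for any (i,j) ∈ 𝓛 and (k,ℓ) with ℓ < k ≤ n and (k,ℓ) ∉ 𝓛, we have C_{ij,kℓ} = 0. -/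
theorem Matrix.apply_eq_zero_of_ne_of_not_mem_support {ι α : Type*} [LinearOrder ι] [Zero α]
    {L : Matrix ι ι α} {S : Set (ι × ι)}
    (hLlow : ∀ i j, i < j → L i j = 0) (hsupp : ∀ a b, b < a → (a, b) ∉ S → L a b = 0)
    {a b : ι} (hab : a ≠ b) (hS : (a, b) ∉ S) : L a b = 0 := by
  rcases hab.lt_or_gt with h | h
  · exact hLlow a b h
  · exact hsupp a b h hS

theorem stmt16_general {n : ℕ} (L : Matrix (Fin n) (Fin n) ℝ)
    (hLlow : ∀ i j, i < j → L i j = 0)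
    (𝓛 : Set (Fin n × Fin n))
    (hclosed : ∀ i j k : Fin n, (i, j) ∈ 𝓛 → (k, j) ∈ 𝓛 → i < k → (k, i) ∈ 𝓛)
    (hsupp : ∀ a b : Fin n, b < a → (a, b) ∉ 𝓛 → L a b = 0)
    (i j k l : Fin n) (hij : j ≤ i)
    (hmem : (i, j) ∈ 𝓛) (hlk : l < k) (hnot : (k, l) ∉ 𝓛) :
    L k j * (if k = l then 0 else 1) * (if i = l then 1 else 0)
      + L l j * (if i = k then 1 else 0) = 0 := by
  have hzero : ∀ {a b}, a ≠ b → (a, b) ∉ 𝓛 → L a b = 0 :=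
    Matrix.apply_eq_zero_of_ne_of_not_mem_support hLlow hsupp
  by_cases hil : i = l
  · subst hil
    -- `(k, j) ∈ 𝓛` would close the corner `(i, j), (k, j)` to `(k, i) ∈ 𝓛`.
    have hkj : L k j = 0 :=
      hzero (hij.trans_lt hlk).ne' fun h => hnot (hclosed i j k hmem h hlk)
    simp [hkj, hlk.ne]
  · by_cases hik : i = k
    · subst hik
      -- `(l, j) ∈ 𝓛` would close the corner `(l, j), (i, j)` to `(i, l) ∈ 𝓛`.
      have hlj : L l j = 0 :=
        hzero (by rintro rfl; exact hnot hmem) fun h => hnot (hclosed l j i h hmem hlk)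
      simp [hil, hlj]
    · simp [hil, hik]

/-- Closure of `𝓛` (Takahashi et al.): if `(i,j) ∈ 𝓛` and `(k,ℓ) ∉ 𝓛` with `ℓ < k`,
then `C_{ij,kℓ} = L_{kj}(1 − δ_{kℓ})δ_{iℓ} + L_{ℓj}δ_{ik} = 0`. -/
theorem stmt16 {n : ℕ} (L : Matrix (Fin n) (Fin n) ℝ)
    (hLlow : ∀ i j, i < j → L i j = 0) (hLdiag : ∀ i, L i i = 1)
    (𝓛 : Set (Fin n × Fin n))
    (hdiag : ∀ i : Fin n, (i, i) ∈ 𝓛)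
    (hclosed : ∀ i j k : Fin n, (i, j) ∈ 𝓛 → (k, j) ∈ 𝓛 → i < k → (k, i) ∈ 𝓛)
    (hsupp : ∀ a b : Fin n, b < a → (a, b) ∉ 𝓛 → L a b = 0)
    (i j k l : Fin n) (hij : j ≤ i) (hkl : l ≤ k)
    (hmem : (i, j) ∈ 𝓛) (hlk : l < k) (hnot : (k, l) ∉ 𝓛) :
    L k j * (if k = l then 0 else 1) * (if i = l then 1 else 0)
      + L l j * (if i = k then 1 else 0) = 0 :=
  stmt16_general L hLlow 𝓛 hclosed hsupp i j k l hij hmem hlk hnot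
end
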